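/- Fix an integer n ≥ 2 and a real ε > 0 with n ≥ 1/ε. Let the item set be M = [n] × [n] (n² items), and let all n agents (with equal entitlements) share the common valuation v(S) = the number of indices g ∈ [n] such that S contains at least one item of the form (g, k). Then: (i) v is submodular; (ii) the maximin share of each agent, i.e. the maximum over partitions of M into n bundles of the minimum bundle value, is at least n; (iii) the allocation that gives agent i the bundle G_i = {(i, k) : k ∈ [n]} is a partition of all of M, is envy-free (each agent values every bundle G_j at exactly 1), and gives every agent value 1, which is at most ε times her maximin share. -/

import Mathlib

open Finset

/-- The common valuation: the value of a set `S` of items in `[n] × [n]` is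
the number of groups `g` such that `S` contains an item of the form `(g, k)`. -/
noncomputable def coverVal (n : ℕ) (S : Finset (Fin n × Fin n)) : ℝ :=
  ((Finset.univ.filter (fun g : Fin n => ∃ k, (g, k) ∈ S)).card : ℝ)

/-- The bundle `G i = {(i, k) : k ∈ [n]}` given to agent `i`. -/
def bundleG (n : ℕ) (i : Fin n) : Finset (Fin n × Fin n) :=
  Finset.univ.image (fun k => (i, k))

/-! The valuation counts the rows `g` met by a bundle, i.e. it is the coverage function
`S ↦ #(S.image Prod.fst)`; coverage functions are submodular. Cutting `[n] × [n]` into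
columns gives every bundle all `n` rows, so the maximin share is at least `n`, while the
row bundles `G i` each meet a single row and are worth `1` to everybody. -/

theorem card_image_insert_add_card_image_le {α β : Type*} [DecidableEq α] [DecidableEq β]
    (f : α → β) {S T : Finset α} (hST : S ⊆ T) (e : α) :
    ((insert e T).image f).card + (S.image f).card ≤
      ((insert e S).image f).card + (T.image f).card := by
  rw [image_insert, image_insert]
  by_cases heT : f e ∈ T.image f
  · rw [insert_eq_of_mem heT, add_comm]
    exact Nat.add_le_add_right (card_le_card (subset_insert _ _)) _
  · have heS : f e ∉ S.image f := fun h => heT (image_subset_image hST h)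
    rw [card_insert_of_notMem heT, card_insert_of_notMem heS]
    omega

def IsPartition {ι α : Type*} (B : ι → Finset α) : Prop :=
  (∀ i j, i ≠ j → Disjoint (B i) (B j)) ∧ ∀ e, ∃ i, e ∈ B i

theorem isPartition_of_mem_iff {ι α : Type*} {B : ι → Finset α} (f : α → ι)
    (h : ∀ e i, e ∈ B i ↔ f e = i) : IsPartition B := by
  refine ⟨fun i j hij => disjoint_left.2 fun e hi hj => hij ?_, fun e => ⟨f e, (h e _).2 rfl⟩⟩
  rw [← (h e i).1 hi, (h e j).1 hj]

theorem iInf_le_sSup_iInf_partition {ι α : Type*} [Finite ι] [Nonempty ι]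
    {v : Finset α → ℝ} {c : ℝ} (hv : ∀ S, v S ≤ c) {B : ι → Finset α} (hB : IsPartition B) :
    ⨅ j, v (B j) ≤ sSup {t : ℝ | ∃ B : ι → Finset α, IsPartition B ∧ t = ⨅ j, v (B j)} := by
  refine le_csSup ⟨c, ?_⟩ ⟨B, hB, rfl⟩
  rintro t ⟨C, -, rfl⟩
  obtain ⟨j⟩ := ‹Nonempty ι›
  exact (ciInf_le (Set.finite_range _).bddBelow j).trans (hv _)

theorem coverVal_eq_card_image (n : ℕ) (S : Finset (Fin n × Fin n)) :
    coverVal n S = (S.image Prod.fst).card := by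
  unfold coverVal
  congr 2
  ext g
  simp

theorem coverVal_le (n : ℕ) (S : Finset (Fin n × Fin n)) : coverVal n S ≤ n := by
  rw [coverVal_eq_card_image]
  exact_mod_cast (card_le_univ _).trans_eq (Fintype.card_fin n)

theorem coverVal_insert_sub_le {n : ℕ} {S T : Finset (Fin n × Fin n)} (hST : S ⊆ T)
    (e : Fin n × Fin n) :
    coverVal n (insert e T) - coverVal n T ≤ coverVal n (insert e S) - coverVal n S := by
  have h := card_image_insert_add_card_image_le Prod.fst hST e
  rw [sub_le_sub_iff]
  simp only [coverVal_eq_card_image]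
  exact_mod_cast h

theorem mem_bundleG {n : ℕ} (e : Fin n × Fin n) (i : Fin n) : e ∈ bundleG n i ↔ e.1 = i := by
  simp only [bundleG, mem_image, mem_univ, true_and]
  exact ⟨fun ⟨k, hk⟩ => hk ▸ rfl, fun h => ⟨e.2, by rw [← h]⟩⟩

theorem coverVal_bundleG (n : ℕ) (j : Fin n) : coverVal n (bundleG n j) = 1 := by
  rw [coverVal_eq_card_image, Nat.cast_eq_one, card_eq_one]
  refine ⟨j, eq_singleton_iff_unique_mem.2 ⟨mem_image.2 ⟨(j, j), ?_, rfl⟩, ?_⟩⟩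
  · exact (mem_bundleG _ _).2 rfl
  · intro g hg
    obtain ⟨e, he, rfl⟩ := mem_image.1 hg
    exact (mem_bundleG _ _).1 he

theorem coverVal_column (n : ℕ) (i : Fin n) :
    coverVal n (univ.filter fun e : Fin n × Fin n => e.2 = i) = n := by
  rw [coverVal_eq_card_image, eq_univ_of_forall fun g => mem_image.2 ⟨(g, i), by simp, rfl⟩]
  simp

theorem stmt_3 (n : ℕ) (ε : ℝ) (hε : 0 < ε) (hnε : (1 : ℝ) / ε ≤ n) :
    -- (i) submodularity
    (∀ S T : Finset (Fin n × Fin n), ∀ e, S ⊆ T → e ∉ T →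
      coverVal n (insert e T) - coverVal n T ≤ coverVal n (insert e S) - coverVal n S) ∧
    -- the maximin share: max over partitions into n bundles of the min bundle value
    (let MMS : ℝ := sSup {t : ℝ | ∃ B : Fin n → Finset (Fin n × Fin n),
        ((∀ i j, i ≠ j → Disjoint (B i) (B j)) ∧ (∀ e, ∃ i, e ∈ B i)) ∧
        t = ⨅ j, coverVal n (B j)};
      -- (ii) MMS ≥ n
      ((n : ℝ) ≤ MMS) ∧
      -- (iii) G is a partition of all of M
      ((∀ i j, i ≠ j → Disjoint (bundleG n i) (bundleG n j)) ∧
        (∀ e, ∃ i, e ∈ bundleG n i)) ∧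
      -- each agent values every bundle G j at exactly 1 (hence EF; each agent gets value 1)
      (∀ j, coverVal n (bundleG n j) = 1) ∧
      -- value 1 is at most ε times the maximin share
      ((1 : ℝ) ≤ ε * MMS)) := by
  refine ⟨fun S T e hST _ => coverVal_insert_sub_le hST e, ?_⟩
  intro MMS
  have hεn : 1 ≤ ε * n := (div_le_iff₀' hε).1 hnε
  have hn : (0 : ℝ) < n := (one_div_pos.2 hε).trans_le hnε
  have : Nonempty (Fin n) := Fin.pos_iff_nonempty.1 (by exact_mod_cast hn)
  have hMMS : (n : ℝ) ≤ MMS := by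
    have hcolumns := iInf_le_sSup_iInf_partition (coverVal_le n)
      (isPartition_of_mem_iff (B := fun i => univ.filter fun e : Fin n × Fin n => e.2 = i)
        Prod.snd fun e i => by simp)
    simp only [coverVal_column, ciInf_const] at hcolumns
    exact hcolumns
  refine ⟨hMMS, isPartition_of_mem_iff Prod.fst mem_bundleG, coverVal_bundleG n, ?_⟩
  exact hεn.trans (mul_le_mul_of_nonneg_left hMMS hε.le)
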